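/- arXiv:1607.05825 — 2 statements merged into one kernel-verified Lean document; each statement's English description precedes it below -/
import Mathlib

section
/- Let k ≥ 3 and let m be an odd positive integer such that the prefix of the Thue-Morse word of length km is not a k-anti-power. Then k - 1 ≥ 2^{⌈log₂(m/3)⌉}. -/
/-!
Two equal blocks `p < q` of odd length `m` make the Thue-Morse word agree with its shift by
`(q - p) * m = 2 ^ v * (odd)` on a window of length `m`, where `2 ^ v ≤ q - p ≤ k - 1`.
Such a window has length at most `3 * 2 ^ v`: the relations `t(2n) = t(n)`, `t(2n+1) = 1 - t(n)`
halve both the window and the shift, and for an odd shift four agreements in a row would force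
three equal consecutive letters. Hence `m / 3 ≤ 2 ^ v`.
-/

open Filter

/-- The Thue-Morse word, indexed from 1: `tm i` is the parity of the number of
1's in the binary expansion of `i - 1`. -/
def tm (i : ℕ) : ℕ := (Nat.digits 2 (i - 1)).sum % 2

/-- The factor `t_a t_{a+1} ⋯ t_b` of the Thue-Morse word. -/
def seg (a b : ℕ) : List ℕ := (List.range (b + 1 - a)).map (fun j => tm (a + j))

/-- The `i`-th block of length `m` of the Thue-Morse word (blocks indexed from 0):
`t_{im+1} ⋯ t_{(i+1)m}`. -/
def block (m i : ℕ) : List ℕ := seg (i * m + 1) ((i + 1) * m)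

/-- The prefix of the Thue-Morse word of length `k * m` is a `k`-anti-power:
its `k` consecutive blocks of length `m` are pairwise distinct. -/
def IsAntiPowerPrefix (m k : ℕ) : Prop :=
  ∀ i j, i < k → j < k → i ≠ j → block m i ≠ block m j

/-- `w` is a factor (contiguous substring) of the Thue-Morse word. -/
def IsFactor (w : List ℕ) : Prop :=
  ∃ a : ℕ, w = (List.range w.length).map (fun j => tm (a + 1 + j))

/-- `δ(m) = ⌈log₂ (m/3)⌉` (a nonnegative integer for `m ≥ 2`). -/
noncomputable def delta (m : ℕ) : ℕ := (⌈Real.logb 2 ((m : ℝ) / 3)⌉).toNat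

/-- `⌈log₂ m⌉`. -/
noncomputable def ell (m : ℕ) : ℕ := (⌈Real.logb 2 (m : ℝ)⌉).toNat

/-- `K(m)`: the smallest `k` such that the prefix of the Thue-Morse word of
length `k * m` is not a `k`-anti-power. -/
noncomputable def Kap (m : ℕ) : ℕ := sInf {k | ¬ IsAntiPowerPrefix m k}

/-- `γ(k)`: the smallest odd positive integer `m` such that the prefix of the
Thue-Morse word of length `k * m` is a `k`-anti-power. -/
noncomputable def gam (k : ℕ) : ℕ := sInf {m | Odd m ∧ IsAntiPowerPrefix m k}

/-- `Γ(k)`: the largest odd positive integer `m` such that the prefix of the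
Thue-Morse word of length `k * m` is not a `k`-anti-power. -/
noncomputable def Gam (k : ℕ) : ℕ := sSup {m | Odd m ∧ ¬ IsAntiPowerPrefix m k}

/-- The Thue-Morse morphism `μ` (0 ↦ 01, 1 ↦ 10) on words. -/
def mu (w : List ℕ) : List ℕ := w.flatMap (fun a => if a = 0 then [0, 1] else [1, 0])

def thueMorse (n : ℕ) : ℕ := (Nat.digits 2 n).sum % 2

theorem thueMorse_le_one (n : ℕ) : thueMorse n ≤ 1 :=
  Nat.lt_succ_iff.mp (Nat.mod_lt _ two_pos)

theorem thueMorse_two_mul (n : ℕ) : thueMorse (2 * n) = thueMorse n := by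
  rcases Nat.eq_zero_or_pos n with rfl | hn
  · rfl
  · rw [thueMorse, Nat.digits_def' one_lt_two (by omega)]
    simp [thueMorse]

theorem thueMorse_two_mul_add_one (n : ℕ) : thueMorse (2 * n + 1) = 1 - thueMorse n := by
  have hn := thueMorse_le_one n
  rw [thueMorse, Nat.digits_def' one_lt_two (by omega), show (2 * n + 1) % 2 = 1 by omega,
    show (2 * n + 1) / 2 = n by omega, List.sum_cons]
  unfold thueMorse at hn ⊢
  omega

theorem thueMorse_not_three_consecutive_eq (c : ℕ) :
    ¬ (thueMorse c = thueMorse (c + 1) ∧ thueMorse (c + 1) = thueMorse (c + 2)) := by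
  rcases Nat.even_or_odd' c with ⟨b, rfl | rfl⟩
  · rw [thueMorse_two_mul, thueMorse_two_mul_add_one]
    have := thueMorse_le_one b
    omega
  · have := thueMorse_le_one (b + 1)
    rw [show 2 * b + 1 + 1 = 2 * (b + 1) by ring, show 2 * b + 1 + 2 = 2 * (b + 1) + 1 by ring,
      thueMorse_two_mul, thueMorse_two_mul_add_one (b + 1)]
    omega

theorem tm_add_one (n : ℕ) : tm (n + 1) = thueMorse n := by
  simp [tm, thueMorse]

theorem thueMorse_eq_of_agree_odd_shift_of_even {n d : ℕ} (hn : Even n) (hd : Odd d)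
    (h₀ : thueMorse n = thueMorse (n + d)) (h₁ : thueMorse (n + 1) = thueMorse (n + 1 + d)) :
    thueMorse (n / 2 + d / 2) = thueMorse (n / 2 + d / 2 + 1) := by
  obtain ⟨b, rfl⟩ := hn.two_dvd
  obtain ⟨e, rfl⟩ := hd
  rw [show 2 * b + (2 * e + 1) = 2 * (b + e) + 1 by ring, thueMorse_two_mul,
    thueMorse_two_mul_add_one] at h₀
  rw [show 2 * b + 1 + (2 * e + 1) = 2 * (b + e + 1) by ring, thueMorse_two_mul,
    thueMorse_two_mul_add_one] at h₁
  rw [show 2 * b / 2 = b by omega, show (2 * e + 1) / 2 = e by omega]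
  have := thueMorse_le_one b
  have := thueMorse_le_one (b + e)
  omega

theorem thueMorse_eq_of_agree_odd_shift_of_odd {n d : ℕ} (hn : Odd n) (hd : Odd d)
    (h₀ : thueMorse n = thueMorse (n + d)) (h₁ : thueMorse (n + 1) = thueMorse (n + 1 + d)) :
    thueMorse (n / 2) = thueMorse (n / 2 + 1) := by
  obtain ⟨b, rfl⟩ := hn
  obtain ⟨e, rfl⟩ := hd
  rw [show 2 * b + 1 + (2 * e + 1) = 2 * (b + e + 1) by ring, thueMorse_two_mul,
    thueMorse_two_mul_add_one] at h₀
  rw [show 2 * b + 1 + 1 + (2 * e + 1) = 2 * (b + e + 1) + 1 by ring,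
    show 2 * b + 1 + 1 = 2 * (b + 1) by ring, thueMorse_two_mul, thueMorse_two_mul_add_one] at h₁
  rw [show (2 * b + 1) / 2 = b by omega]
  have := thueMorse_le_one b
  have := thueMorse_le_one (b + e + 1)
  omega

theorem thueMorse_not_agree_odd_shift {d : ℕ} (hd : Odd d) (n : ℕ) :
    ¬ ∀ t ≤ 3, thueMorse (n + t) = thueMorse (n + t + d) := by
  intro h
  have h₀ : thueMorse n = thueMorse (n + d) := h 0 (by norm_num)
  rcases Nat.even_or_odd n with hn | hn
  · have h₂ := thueMorse_eq_of_agree_odd_shift_of_even (hn.add even_two) hd (h 2 (by norm_num))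
      (h 3 (by norm_num))
    rw [show (n + 2) / 2 + d / 2 = n / 2 + d / 2 + 1 by omega] at h₂
    exact thueMorse_not_three_consecutive_eq (n / 2 + d / 2)
      ⟨thueMorse_eq_of_agree_odd_shift_of_even hn hd h₀ (h 1 (by norm_num)), h₂⟩
  · have h₂ := thueMorse_eq_of_agree_odd_shift_of_odd (hn.add_even even_two) hd
      (h 2 (by norm_num)) (h 3 (by norm_num))
    rw [show (n + 2) / 2 = n / 2 + 1 by omega] at h₂
    exact thueMorse_not_three_consecutive_eq (n / 2)
      ⟨thueMorse_eq_of_agree_odd_shift_of_odd hn hd h₀ (h 1 (by norm_num)), h₂⟩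

theorem thueMorse_agree_div_two {n s L : ℕ}
    (h : ∀ t ≤ 2 * L, thueMorse (n + t) = thueMorse (n + t + 2 * s)) :
    ∀ u ≤ L, thueMorse (n / 2 + u) = thueMorse (n / 2 + u + s) := by
  intro u hu
  have h' := h (2 * u) (by omega)
  rcases Nat.even_or_odd' n with ⟨b, rfl | rfl⟩
  · rw [show 2 * b + 2 * u + 2 * s = 2 * (b + u + s) by ring,
      show 2 * b + 2 * u = 2 * (b + u) by ring, thueMorse_two_mul, thueMorse_two_mul] at h'
    rwa [show 2 * b / 2 = b by omega]
  · rw [show 2 * b + 1 + 2 * u + 2 * s = 2 * (b + u + s) + 1 by ring,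
      show 2 * b + 1 + 2 * u = 2 * (b + u) + 1 by ring,
      thueMorse_two_mul_add_one, thueMorse_two_mul_add_one] at h'
    rw [show (2 * b + 1) / 2 = b by omega]
    have := thueMorse_le_one (b + u)
    have := thueMorse_le_one (b + u + s)
    omega

theorem thueMorse_not_agree_shift (v : ℕ) {d : ℕ} (hd : Odd d) (n : ℕ) :
    ¬ ∀ t ≤ 3 * 2 ^ v, thueMorse (n + t) = thueMorse (n + t + 2 ^ v * d) := by
  induction v generalizing n with
  | zero => simpa using thueMorse_not_agree_odd_shift hd n
  | succ v ih =>
    intro h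
    refine ih (n / 2) (thueMorse_agree_div_two fun t ht => ?_)
    rw [show 2 * (2 ^ v * d) = 2 ^ (v + 1) * d by ring]
    exact h t (by rw [pow_succ]; omega)

theorem block_eq_map (m i : ℕ) :
    block m i = (List.range m).map fun t => thueMorse (i * m + t) := by
  rw [block, seg, show (i + 1) * m + 1 - (i * m + 1) = m by rw [add_one_mul]; omega]
  refine List.map_congr_left fun t _ => ?_
  rw [show i * m + 1 + t = i * m + t + 1 by ring, tm_add_one]

theorem le_three_mul_two_pow_of_block_eq {m p v o : ℕ} (hm : Odd m) (ho : Odd o)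
    (h : block m p = block m (p + 2 ^ v * o)) : m ≤ 3 * 2 ^ v := by
  rw [block_eq_map, block_eq_map, List.map_inj_left] at h
  by_contra! hlt
  refine thueMorse_not_agree_shift v (ho.mul hm) (p * m) fun t ht => ?_
  rw [h t (List.mem_range.mpr (by omega))]
  congr 1
  ring

theorem delta_le_of_le_three_mul_two_pow {m v : ℕ} (h : m ≤ 3 * 2 ^ v) : delta m ≤ v := by
  rw [delta, Int.toNat_le, Int.ceil_le]
  rcases m.eq_zero_or_pos with rfl | hm
  · simp
  rw [Real.logb_le_iff_le_rpow one_lt_two (by positivity), Int.cast_natCast, Real.rpow_natCast,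
    div_le_iff₀ three_pos]
  exact_mod_cast h.trans_eq (mul_comm _ _)

theorem stmt6_general (k m : ℕ) (hm : Odd m)
    (h : ¬ IsAntiPowerPrefix m k) : 2 ^ delta m ≤ k - 1 := by
  obtain ⟨p, q, hpq, hqk, hblock⟩ : ∃ p q, p < q ∧ q < k ∧ block m p = block m q := by
    simp only [IsAntiPowerPrefix, not_forall, not_not] at h
    obtain ⟨i, j, hi, hj, hij, heq⟩ := h
    rcases Nat.lt_or_gt_of_ne hij with hlt | hgt
    · exact ⟨i, j, hlt, hj, heq⟩
    · exact ⟨j, i, hgt, hi, heq.symm⟩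
  obtain ⟨v, o, ho, hqp⟩ := Nat.exists_eq_two_pow_mul_odd (Nat.sub_ne_zero_of_lt hpq)
  have hm3 : m ≤ 3 * 2 ^ v :=
    le_three_mul_two_pow_of_block_eq hm ho (by rwa [← hqp, Nat.add_sub_cancel' hpq.le])
  calc 2 ^ delta m ≤ 2 ^ v := Nat.pow_le_pow_right two_pos (delta_le_of_le_three_mul_two_pow hm3)
    _ ≤ 2 ^ v * o := Nat.le_mul_of_pos_right _ ho.pos
    _ = q - p := hqp.symm
    _ ≤ k - 1 := by omega

theorem stmt6 (k m : ℕ) (hk : 3 ≤ k) (hm : Odd m) (hmpos : 0 < m)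
    (h : ¬ IsAntiPowerPrefix m k) : 2 ^ delta m ≤ k - 1 :=
  stmt6_general k m hm h
end

section
/- Let m ≥ 3 be odd with ℓ = ⌈log₂ m⌉, and suppose there is a positive integer j with t_j t_{j+1} = t_{m+j} t_{m+j+1}. Then K(m) < (1 + (j+1)/m)·2^ℓ, where K(m) is the least k such that the length-km prefix of the Thue-Morse word is not a k-anti-power. -/
/-!
Put `L = 2 ^ ℓ ≥ m`. For `r < L`, `t_{Lq + r + 1} ≡ t_{q+1} + t_{r+1} (mod 2)`, so the hypotheses
`t_j = t_{m+j}` and `t_{j+1} = t_{m+j+1}` make the factor of `t` occupying positions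
`L(j-1)+1, …, L(j+1)` reappear `mL` positions later. Since `m ≤ L`, this window contains a whole
block `i` with `m(i+1) < L(j+1)`, and block `i + L` then equals it; hence
`K(m) ≤ i + L + 1 < L + L(j+1)/m`.
-/

open Filter

theorem Nat.digits_sum_add_base_pow_mul {b p n a : ℕ} (hb : 1 < b) (hn : n < b ^ p) :
    (Nat.digits b (n + b ^ p * a)).sum = (Nat.digits b n).sum + (Nat.digits b a).sum := by
  rcases Nat.eq_zero_or_pos a with rfl | ha
  · simp
  rw [← Nat.add_sub_cancel' ((Nat.digits_length_le_iff hb n).mpr hn),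
    ← Nat.digits_append_zeroes_append_digits hb ha]
  simp

lemma tm_succ (n : ℕ) : tm (n + 1) = (Nat.digits 2 n).sum % 2 := rfl

lemma tm_two_pow_mul_add_succ {p r : ℕ} (q : ℕ) (hr : r < 2 ^ p) :
    tm (2 ^ p * q + r + 1) = (tm (q + 1) + tm (r + 1)) % 2 := by
  rw [tm_succ, tm_succ, tm_succ, add_comm (2 ^ p * q),
    Nat.digits_sum_add_base_pow_mul one_lt_two hr]
  omega

lemma tm_succ_eq_of_two_pow_mul_le {p d a b x : ℕ}
    (h : ∀ q, a ≤ q → q < b → tm (q + 1) = tm (q + d + 1))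
    (hax : 2 ^ p * a ≤ x) (hxb : x < 2 ^ p * b) :
    tm (x + 1) = tm (x + 2 ^ p * d + 1) := by
  have hpos : 0 < 2 ^ p := by positivity
  have haq : a ≤ x / 2 ^ p := (Nat.le_div_iff_mul_le hpos).mpr (mul_comm a _ ▸ hax)
  have hqb : x / 2 ^ p < b := (Nat.div_lt_iff_lt_mul hpos).mpr (mul_comm b _ ▸ hxb)
  have hr : x % 2 ^ p < 2 ^ p := Nat.mod_lt _ hpos
  set q := x / 2 ^ p
  set r := x % 2 ^ p
  rw [← Nat.div_add_mod x (2 ^ p), show 2 ^ p * q + r + 2 ^ p * d = 2 ^ p * (q + d) + r by ring,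
    tm_two_pow_mul_add_succ _ hr, tm_two_pow_mul_add_succ _ hr, h q haq hqb]

lemma block_eq_block_add {m i d : ℕ}
    (h : ∀ c < m, tm (i * m + c + 1) = tm (i * m + c + d * m + 1)) :
    block m i = block m (i + d) := by
  have hlen : ∀ n, (n + 1) * m + 1 - (n * m + 1) = m := fun n => by rw [add_mul]; omega
  unfold block seg
  rw [hlen, hlen]
  refine List.map_congr_left fun c hc => ?_
  convert h c (List.mem_range.mp hc) using 2 <;> ring

lemma Kap_le_of_block_eq {m i i' : ℕ} (hii' : i < i') (h : block m i = block m i') :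
    Kap m ≤ i' + 1 :=
  Nat.sInf_le fun hap => hap i i' (by omega) (by omega) hii'.ne h

lemma ell_eq_clog (m : ℕ) : ell m = Nat.clog 2 m := by
  rw [ell, Int.ceil_toNat]
  exact_mod_cast Real.natCeil_logb_natCast 2 m

lemma exists_block_eq_block_add_two_pow {m p j : ℕ} (hm : 0 < m) (hmp : m ≤ 2 ^ p) (hj : 0 < j)
    (h : tm j = tm (m + j) ∧ tm (j + 1) = tm (m + j + 1)) :
    ∃ i, m * (i + 1) < 2 ^ p * (j + 1) ∧ block m i = block m (i + 2 ^ p) := by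
  have hq : ∀ q, j - 1 ≤ q → q < j + 1 → tm (q + 1) = tm (q + m + 1) := by
    intro q hq1 hq2
    obtain rfl | rfl : q = j - 1 ∨ q = j := by omega
    · rw [Nat.sub_add_cancel hj, add_right_comm, Nat.sub_add_cancel hj, add_comm]; exact h.1
    · rw [add_comm q m]; exact h.2
  generalize hL : 2 ^ p = L at hmp ⊢
  obtain ⟨i, hAi, hiA⟩ : ∃ i, L * (j - 1) ≤ i * m ∧ i * m < L * (j - 1) + m := by
    have hdiv := Nat.div_add_mod (L * (j - 1) + m - 1) m
    have hmod := Nat.mod_lt (L * (j - 1) + m - 1) hm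
    exact ⟨(L * (j - 1) + m - 1) / m, by rw [mul_comm _ m]; omega, by rw [mul_comm _ m]; omega⟩
  have hjL : L * (j + 1) = L * (j - 1) + 2 * L := by
    rw [show j + 1 = j - 1 + 2 by omega]; ring
  refine ⟨i, by rw [mul_add_one, mul_comm m]; omega, block_eq_block_add fun c hc => ?_⟩
  subst hL
  rw [tm_succ_eq_of_two_pow_mul_le (p := p) hq (x := i * m + c) (by omega) (by omega),
    mul_comm (2 ^ p) m]

theorem stmt16_general (m : ℕ) (hm3 : 3 ≤ m) (j : ℕ) (hj : 0 < j)
    (h : tm j = tm (m + j) ∧ tm (j + 1) = tm (m + j + 1)) :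
    (Kap m : ℝ) < (1 + (j + 1 : ℝ) / m) * 2 ^ ell m := by
  have hmL : m ≤ 2 ^ ell m := ell_eq_clog m ▸ Nat.le_pow_clog one_lt_two m
  obtain ⟨i, hi, hblock⟩ := exists_block_eq_block_add_two_pow (by omega) hmL hj h
  have hK : Kap m ≤ i + 2 ^ ell m + 1 :=
    Kap_le_of_block_eq (Nat.lt_add_of_pos_right (by positivity)) hblock
  have hiR : (m : ℝ) * (i + 1) < 2 ^ ell m * (j + 1) := by exact_mod_cast hi
  have hm0 : (0 : ℝ) < m := by positivity
  calc (Kap m : ℝ) ≤ 2 ^ ell m + (i + 1) := by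
        exact_mod_cast (by omega : Kap m ≤ 2 ^ ell m + (i + 1))
    _ < 2 ^ ell m + 2 ^ ell m * (j + 1) / m := by gcongr; exact (lt_div_iff₀' hm0).mpr hiR
    _ = _ := by ring

theorem stmt16 (m : ℕ) (hm : Odd m) (hm3 : 3 ≤ m) (j : ℕ) (hj : 0 < j)
    (h : tm j = tm (m + j) ∧ tm (j + 1) = tm (m + j + 1)) :
    (Kap m : ℝ) < (1 + (j + 1 : ℝ) / m) * 2 ^ ell m :=
  stmt16_general m hm3 j hj h
end
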